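/- arXiv:1706.08377 — 2 statements merged into one kernel-verified Lean document; each statement's English description precedes it below -/
import Mathlib

section
/- Let G be a group with a finite generating set S, let L ⊆ G, and let R₀ be a natural number such that for every g ∈ G there exists x ∈ G with word length |x|_S ≤ R₀ and g·x ∈ L. Then for every natural number R ≥ R₀ one has |L ∩ B(R)| · |B(R₀)|² ≥ |B(R)|; equivalently, the proportion |L ∩ B(R)| / |B(R)| is at least 1/|B(R₀)|² for all R ≥ R₀. (Quantitative form of the paper's Lemma guaranteeing that the proportion of elements of L in large balls stays away from zero, obtained by combining the covering inequality |B(R−R₀)| ≤ |L ∩ B(R)|·|B(R₀)| with the submultiplicativity |B(R)| ≤ |B(R−R₀)|·|B(R₀)|.) -/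
open Pointwise

/-- The ball of radius `R` in the word metric on `G` with respect to the finite
generating set `S`: the set of elements expressible as a product of at most `R`
elements of `S ∪ S⁻¹` (padding with the identity). -/
def wordBall {G : Type*} [Group G] [DecidableEq G] (S : Finset G) (R : ℕ) : Finset G :=
  (S ∪ S⁻¹ ∪ {1}) ^ R

/-- If every `g ∈ G` admits some `x` of word length at most `R₀`
with `g · x ∈ L`, then for every `R ≥ R₀` one has
`|L ∩ B(R)| · |B(R₀)|² ≥ |B(R)|`, i.e. the proportion of `L` in `B(R)` is at
least `1 / |B(R₀)|²`. -/
theorem card_inter_mul_sq_ge_card_ball {G : Type*} [Group G] [DecidableEq G]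
    (S : Finset G) (hS : Subgroup.closure (S : Set G) = ⊤) (L : Set G) (R₀ : ℕ)
    (hL : ∀ g : G, ∃ x : G, x ∈ wordBall S R₀ ∧ g * x ∈ L)
    (R : ℕ) (hR : R₀ ≤ R) :
    (L ∩ (wordBall S R : Set G)).ncard * (wordBall S R₀).card ^ 2 ≥
      (wordBall S R).card := by
  classical
  set M : Finset G := S ∪ S⁻¹ ∪ {1} with hMdef
  have hMinv : M⁻¹ = M := by
    ext a
    simp [hMdef, Finset.mem_inv', or_comm, or_assoc, or_left_comm, eq_comm]
  have hBinv : (wordBall S R₀)⁻¹ = wordBall S R₀ := by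
    show (M ^ R₀)⁻¹ = M ^ R₀
    rw [← inv_pow, hMinv]
  have hsplit : wordBall S R = wordBall S (R - R₀) * wordBall S R₀ := by
    show M ^ R = M ^ (R - R₀) * M ^ R₀
    rw [← pow_add, Nat.sub_add_cancel hR]
  set T : Finset G := (wordBall S R).filter (fun g => g ∈ L) with hTdef
  have hTset : (L ∩ (wordBall S R : Set G)) = (T : Set G) := by
    ext g; simp [hTdef, and_comm]
  have hcover : wordBall S (R - R₀) ⊆ T * wordBall S R₀ := by
    intro g hg
    obtain ⟨x, hx, hgx⟩ := hL g
    have hgxB : g * x ∈ wordBall S R := by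
      rw [hsplit]; exact Finset.mul_mem_mul hg hx
    have hxinv : x⁻¹ ∈ wordBall S R₀ := by
      rw [← hBinv]; exact Finset.inv_mem_inv hx
    exact Finset.mem_mul.2 ⟨g * x, Finset.mem_filter.2 ⟨hgxB, hgx⟩, x⁻¹, hxinv, by group⟩
  have h1 : (wordBall S (R - R₀)).card ≤ T.card * (wordBall S R₀).card :=
    le_trans (Finset.card_le_card hcover) Finset.card_mul_le
  have h2 : (wordBall S R).card ≤ (wordBall S (R - R₀)).card * (wordBall S R₀).card := by
    rw [hsplit]; exact Finset.card_mul_le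
  rw [hTset, Set.ncard_coe_finset]
  calc (wordBall S R).card ≤ (wordBall S (R - R₀)).card * (wordBall S R₀).card := h2
    _ ≤ (T.card * (wordBall S R₀).card) * (wordBall S R₀).card :=
        Nat.mul_le_mul_right _ h1
    _ = T.card * (wordBall S R₀).card ^ 2 := by ring
end

section
/- Let G be a group with a finite generating set S and let L ⊆ G. Suppose there exists a finite set X ⊆ G such that for every g ∈ G there is some x ∈ X with g·x ∈ L. Then there exist a real number ε > 0 and a natural number R₀ such that for all natural numbers R > R₀, the cardinality of L ∩ B(R) is greater than ε times the cardinality of B(R), where B(R) is the ball of radius R in the word metric. (Abstract form of the paper's Lemma 'tecnique': the Garside-theoretic hypothesis that g·x is rigid with normal form containing the subword w_a serves only, via the Calvez–Wiest criterion, to guarantee g·x ∈ L.) -/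
/-!
If `X ⊆ B(D)`, then every `g ∈ B(R - D)` has some `g * x` in `L ∩ B(R)`, so `B(R - D)` is covered
by the `|X|` translates `(L ∩ B(R)) * x⁻¹`. Since `B(R) = B(R - D) * B(D)`, this gives
`|B(R)| ≤ |B(D)| * |X| * |L ∩ B(R)|`, i.e. `L` has density at least `1 / (|B(D)| * |X|)` in every
large ball.
-/

open Pointwise

open Finset

theorem Finset.card_le_card_mul_card_of_forall_exists_mul_mem {G : Type*} [Group G]
    [DecidableEq G] {A X F : Finset G} (h : ∀ g ∈ A, ∃ x ∈ X, g * x ∈ F) :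
    #A ≤ #F * #X := by
  have hA : A ⊆ F * X⁻¹ := fun g hg => by
    obtain ⟨x, hx, hgx⟩ := h g hg
    exact mem_mul.2 ⟨g * x, hgx, x⁻¹, inv_mem_inv hx, by group⟩
  calc #A ≤ #(F * X⁻¹) := card_le_card hA
    _ ≤ #F * #X⁻¹ := card_mul_le
    _ = #F * #X := by rw [card_inv]

theorem one_div_succ_mul_lt_of_le_mul {b c f : ℕ} (hb : b ≤ c * f) (hf : 0 < f) :
    1 / ((c + 1 : ℕ) : ℝ) * b < f := by
  rw [one_div_mul_eq_div, div_lt_iff₀ (by positivity)]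
  have : b < (c + 1) * f := by nlinarith
  exact_mod_cast this.trans_eq (mul_comm _ _)

namespace wordBall

variable {G : Type*} [Group G] [DecidableEq G] (S : Finset G)

theorem add (m n : ℕ) : wordBall S (m + n) = wordBall S m * wordBall S n :=
  pow_add _ m n

theorem mono : Monotone (wordBall S) := fun _ _ h =>
  pow_subset_pow_right (by simp) h

theorem exists_mem (hS : Subgroup.closure (S : Set G) = ⊤) (g : G) : ∃ n, g ∈ wordBall S n := by
  have hg : g ∈ Subgroup.closure (S : Set G) := hS ▸ Subgroup.mem_top g
  induction hg using Subgroup.closure_induction'' with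
  | mem x hx => exact ⟨1, by simp [wordBall, mem_coe.1 hx]⟩
  | inv_mem x hx => exact ⟨1, by simp [wordBall, mem_coe.1 hx]⟩
  | one => exact ⟨0, by simp [wordBall]⟩
  | mul x y _ _ hx hy =>
    obtain ⟨m, hm⟩ := hx
    obtain ⟨n, hn⟩ := hy
    exact ⟨m + n, add S m n ▸ mul_mem_mul hm hn⟩

theorem exists_subset (hS : Subgroup.closure (S : Set G) = ⊤) (X : Finset G) :
    ∃ D, X ⊆ wordBall S D := by
  choose f hf using exists_mem S hS
  exact ⟨X.sup f, fun x hx => mono S (le_sup hx) (hf x)⟩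

theorem card_le_mul_card_filter {L : Set G} [DecidablePred (· ∈ L)] {X : Finset G}
    (hX : ∀ g : G, ∃ x ∈ X, g * x ∈ L) {D R : ℕ} (hXD : X ⊆ wordBall S D) (hDR : D ≤ R) :
    #(wordBall S R) ≤ #(wordBall S D) * #X * #((wordBall S R).filter (· ∈ L)) := by
  have hsplit : wordBall S R = wordBall S (R - D) * wordBall S D := by
    rw [← add, Nat.sub_add_cancel hDR]
  have hcover : #(wordBall S (R - D)) ≤ #((wordBall S R).filter (· ∈ L)) * #X := by
    refine card_le_card_mul_card_of_forall_exists_mul_mem fun g hg => ?_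
    obtain ⟨x, hx, hgx⟩ := hX g
    exact ⟨x, hx, mem_filter.2 ⟨hsplit ▸ mul_mem_mul hg (hXD hx), hgx⟩⟩
  calc #(wordBall S R) ≤ #(wordBall S (R - D)) * #(wordBall S D) := hsplit ▸ card_mul_le
    _ ≤ #((wordBall S R).filter (· ∈ L)) * #X * #(wordBall S D) := by gcongr
    _ = _ := by ring

end wordBall

/-- If there is a finite set `X ⊆ G` such that every `g ∈ G`
admits some `x ∈ X` with `g · x ∈ L`, then there are `ε > 0` and `R₀` such that
for all `R > R₀`, `|L ∩ B(R)| > ε · |B(R)|`. -/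
theorem exists_eps_card_inter_gt {G : Type*} [Group G] [DecidableEq G]
    (S : Finset G) (hS : Subgroup.closure (S : Set G) = ⊤) (L : Set G)
    (hX : ∃ X : Finset G, ∀ g : G, ∃ x ∈ X, g * x ∈ L) :
    ∃ ε : ℝ, 0 < ε ∧ ∃ R₀ : ℕ, ∀ R : ℕ, R₀ < R →
      ε * ((wordBall S R).card : ℝ) < ((L ∩ (wordBall S R : Set G)).ncard : ℝ) := by
  classical
  obtain ⟨X, hXL⟩ := hX
  obtain ⟨D, hXD⟩ := wordBall.exists_subset S hS X
  refine ⟨1 / ((#(wordBall S D) * #X + 1 : ℕ) : ℝ), by positivity, D, fun R hR => ?_⟩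
  have hinter : L ∩ (wordBall S R : Set G) = ↑((wordBall S R).filter (· ∈ L)) := by
    ext g
    simp [and_comm]
  have hnonempty : ((wordBall S R).filter (· ∈ L)).Nonempty := by
    obtain ⟨x, hx, h1x⟩ := hXL 1
    exact ⟨x, mem_filter.2 ⟨wordBall.mono S hR.le (hXD hx), by simpa using h1x⟩⟩
  rw [hinter, Set.ncard_coe_finset]
  exact one_div_succ_mul_lt_of_le_mul (wordBall.card_le_mul_card_filter S hXL hXD hR.le) hnonempty.card_pos
end
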